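/- arXiv:2210.12288 — 2 statements merged into one kernel-verified Lean document; each statement's English description precedes it below -/
import Mathlib

section
/- Let T = (V, E) be a finite rooted tree with edge weights satisfying w(e) > 0 for every edge e. Then the map sending a probability vector μ on V to the family of subtree masses (μ(T_{v_e}))_{e∈E} together with the total mass determines μ; consequently, if probability vectors μ, ρ on V satisfy Σ_{e∈E} w(e) · |μ(T_{v_e}) − ρ(T_{v_e})| = 0, then μ = ρ, so the closed-form tree-Wasserstein distance (μ,ρ) ↦ Σ_{e∈E} w(e)|μ(T_{v_e}) − ρ(T_{v_e})| is a metric on probability vectors on V. -/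
open SimpleGraph Finset

/-- The unique path between two vertices of a tree. -/
noncomputable def treePath {V : Type*} (G : SimpleGraph V) (hG : G.IsTree) (u v : V) :
    G.Walk u v :=
  (hG.existsUnique_path u v).choose

/-- The tree metric: the sum of the weights of the edges on the unique path. -/
noncomputable def treeDist {V : Type*} (G : SimpleGraph V) (hG : G.IsTree)
    (w : Sym2 V → ℝ) (u v : V) : ℝ :=
  (((treePath G hG u v).edges).map w).sum

/-- `μ(T_v)`: the total mass assigned by `μ` to the subtree rooted at `v`
(vertices `u` such that `v` lies on the unique path from the root `r` to `u`). -/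
noncomputable def subtreeMass {V : Type*} [Fintype V] [DecidableEq V]
    (G : SimpleGraph V) (hG : G.IsTree) (r v : V) (μ : V → ℝ) : ℝ :=
  ∑ u ∈ Finset.univ.filter (fun u => v ∈ (treePath G hG r u).support), μ u

/-- A probability vector on a finite set. -/
def IsProbVector {X : Type*} [Fintype X] (μ : X → ℝ) : Prop :=
  (∀ x, 0 ≤ μ x) ∧ ∑ x, μ x = 1

lemma treePath_isPath {V : Type*} (G : SimpleGraph V) (hG : G.IsTree) (u v : V) :
    (treePath G hG u v).IsPath :=
  (hG.existsUnique_path u v).choose_spec.1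

lemma treePath_unique {V : Type*} {G : SimpleGraph V} (hG : G.IsTree) {u v : V}
    (p : G.Walk u v) (hp : p.IsPath) : p = treePath G hG u v :=
  (hG.existsUnique_path u v).choose_spec.2 p hp

lemma takeUntil_eq_treePath {V : Type*} [DecidableEq V] {G : SimpleGraph V} (hG : G.IsTree) {r x y : V}
    (hx : x ∈ (treePath G hG r y).support) :
    (treePath G hG r y).takeUntil x hx = treePath G hG r x :=
  treePath_unique hG _ ((treePath_isPath G hG r y).takeUntil hx)

lemma mem_support_trans {V : Type*} [DecidableEq V] {G : SimpleGraph V} (hG : G.IsTree) {r x y z : V}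
    (hx : x ∈ (treePath G hG r y).support) (hy : y ∈ (treePath G hG r z).support) :
    x ∈ (treePath G hG r z).support := by
  have hsub := SimpleGraph.Walk.support_takeUntil_subset (treePath G hG r z) hy
  rw [takeUntil_eq_treePath hG hy] at hsub
  exact hsub hx

lemma treePath_length_lt {V : Type*} [DecidableEq V] {G : SimpleGraph V} (hG : G.IsTree) {r x y : V}
    (hx : x ∈ (treePath G hG r y).support) (hxy : x ≠ y) :
    (treePath G hG r x).length < (treePath G hG r y).length := by
  have hspec := (treePath G hG r y).take_spec hx
  have hlen := congr_arg SimpleGraph.Walk.length hspec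
  rw [SimpleGraph.Walk.length_append, takeUntil_eq_treePath hG hx] at hlen
  have hpos : 0 < ((treePath G hG r y).dropUntil x hx).length := by
    rcases Nat.eq_zero_or_pos ((treePath G hG r y).dropUntil x hx).length with h0 | h
    · exact absurd (SimpleGraph.Walk.eq_of_length_eq_zero h0) hxy
    · exact h
  omega

lemma mem_support_antisymm {V : Type*} [DecidableEq V] {G : SimpleGraph V} (hG : G.IsTree) {r x y : V}
    (hx : x ∈ (treePath G hG r y).support) (hy : y ∈ (treePath G hG r x).support) :
    x = y := by
  by_contra hne
  exact absurd (treePath_length_lt hG hy (Ne.symm hne))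
    (not_lt.mpr (le_of_lt (treePath_length_lt hG hx hne)))

theorem tree_wasserstein_separates {V : Type*} [Fintype V] [DecidableEq V]
    (G : SimpleGraph V) [Fintype G.edgeSet] (hG : G.IsTree) (r : V)
    (w : Sym2 V → ℝ) (hw : ∀ e ∈ G.edgeSet, 0 < w e)
    (far : Sym2 V → V)
    (hfar : ∀ e ∈ G.edgeSet, ∃ a, e = s(a, far e) ∧ a ∈ (treePath G hG r (far e)).support)
    (μ ρ : V → ℝ) (hμ : IsProbVector μ) (hρ : IsProbVector ρ) :
    ((∀ e ∈ G.edgeSet, subtreeMass G hG r (far e) μ = subtreeMass G hG r (far e) ρ) → μ = ρ) ∧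
    ((∑ e ∈ G.edgeFinset,
        w e * |subtreeMass G hG r (far e) μ - subtreeMass G hG r (far e) ρ|) = 0 → μ = ρ) := by
  classical
  set f : V → ℝ := fun x => μ x - ρ x with hf
  set S : V → Finset V :=
    fun v => Finset.univ.filter (fun u => v ∈ (treePath G hG r u).support) with hS
  have hSmem : ∀ v u, u ∈ S v ↔ v ∈ (treePath G hG r u).support := by
    intro v u; simp [hS]
  have hsub : ∀ v, ∑ u ∈ S v, f u = subtreeMass G hG r v μ - subtreeMass G hG r v ρ := by
    intro v
    simp only [subtreeMass, hf, hS, Finset.sum_sub_distrib]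
  have main : (∀ e ∈ G.edgeSet,
      subtreeMass G hG r (far e) μ = subtreeMass G hG r (far e) ρ) → μ = ρ := by
    intro h1
    have hg : ∀ v, ∑ u ∈ S v, f u = 0 := by
      intro v
      by_cases hv : v = r
      · have hSr : S r = Finset.univ := by
          ext u
          simp [hS, SimpleGraph.Walk.start_mem_support]
        rw [hv, hSr]
        simp only [hf, Finset.sum_sub_distrib, hμ.2, hρ.2, sub_self]
      · -- find the parent edge of v
        obtain ⟨b, hadj, q, heq⟩ :=
          SimpleGraph.Walk.exists_eq_cons_of_ne hv (treePath G hG r v).reverse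
        have hb : b ∈ (treePath G hG r v).support := by
          have : b ∈ (treePath G hG r v).reverse.support := by
            rw [heq]
            exact List.mem_cons_of_mem _ q.start_mem_support
          simpa using this
        have he : s(v, b) ∈ G.edgeSet := hadj
        obtain ⟨a, hea, ha⟩ := hfar _ he
        rw [Sym2.eq_iff] at hea
        have hfe : far s(v, b) = v := by
          rcases hea with ⟨hva, hbf⟩ | ⟨hvf, _⟩
          · exfalso
            rw [← hbf, ← hva] at ha
            exact hadj.ne (mem_support_antisymm hG ha hb)
          · exact hvf.symm
        have := h1 _ he
        rw [hfe] at this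
        rw [hsub v, this, sub_self]
    have hvmem : ∀ v, v ∈ S v := by
      intro v
      exact (hSmem v v).mpr (treePath G hG r v).end_mem_support
    have hzero : ∀ n, ∀ v, (S v).card ≤ n → f v = 0 := by
      intro n
      induction n with
      | zero =>
        intro v hv
        have := Finset.card_pos.mpr ⟨v, hvmem v⟩
        omega
      | succ n ih =>
        intro v hv
        have hsum := hg v
        rw [← Finset.add_sum_erase _ f (hvmem v)] at hsum
        have hrest : ∑ u ∈ (S v).erase v, f u = 0 := by
          apply Finset.sum_eq_zero
          intro u hu
          have huv : u ≠ v := Finset.ne_of_mem_erase hu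
          have hvu : v ∈ (treePath G hG r u).support :=
            (hSmem v u).mp (Finset.mem_of_mem_erase hu)
          apply ih
          have hsubset : S u ⊆ (S v).erase v := by
            intro x hx
            have hux : u ∈ (treePath G hG r x).support := (hSmem u x).mp hx
            refine Finset.mem_erase.mpr ⟨?_, ?_⟩
            · intro hxv
              subst hxv
              exact huv (mem_support_antisymm hG hux hvu)
            · exact (hSmem v x).mpr (mem_support_trans hG hvu hux)
          have h1 := Finset.card_le_card hsubset
          have h2 := Finset.card_erase_of_mem (hvmem v)
          omega
        rw [hrest, add_zero] at hsum
        exact hsum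
    funext x
    have := hzero (S x).card x le_rfl
    simpa [hf, sub_eq_zero] using this
  refine ⟨main, fun hsum => main ?_⟩
  intro e he
  have hnn : ∀ e ∈ G.edgeFinset,
      0 ≤ w e * |subtreeMass G hG r (far e) μ - subtreeMass G hG r (far e) ρ| := by
    intro e' he'
    exact mul_nonneg (hw e' (SimpleGraph.mem_edgeFinset.mp he')).le (abs_nonneg _)
  have hterm := (Finset.sum_eq_zero_iff_of_nonneg hnn).mp hsum e (SimpleGraph.mem_edgeFinset.mpr he)
  have hwne : w e ≠ 0 := (hw e he).ne'
  have habs : |subtreeMass G hG r (far e) μ - subtreeMass G hG r (far e) ρ| = 0 := by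
    rcases mul_eq_zero.mp hterm with h | h
    · exact absurd h hwne
    · exact h
  have := abs_eq_zero.mp habs
  linarith
end

section
/- Let X be a finite set and d a dissimilarity on X, and set ε = ‖d − sub(d)‖_∞. Define u* : X × X → ℝ by u*(x,y) = sub(d)(x,y) + ε/2 for x ≠ y and u*(x,x) = 0. Then u* is an ultrametric on X, ‖d − u*‖_∞ = ε/2, and ‖d − u*‖_∞ ≤ ‖d − u‖_∞ for every ultrametric u on X; i.e., the ultrametric closest to d under the supremum norm is sub(d) shifted off-diagonally by half of ‖d − sub(d)‖_∞. -/
open Finset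

/-- An ultrametric on a set `X`. -/
def IsUltrametric {X : Type*} (u : X → X → ℝ) : Prop :=
  (∀ x y, 0 ≤ u x y) ∧ (∀ x y, u x y = u y x) ∧ (∀ x y, u x y = 0 ↔ x = y) ∧
    (∀ x y z, u x z ≤ max (u x y) (u y z))

/-- A dissimilarity on a set `X`. -/
def IsDissimilarity {X : Type*} (d : X → X → ℝ) : Prop :=
  (∀ x y, d x y = d y x) ∧ (∀ x y, 0 ≤ d x y) ∧ (∀ x, d x x = 0) ∧
    (∀ x y, x ≠ y → 0 < d x y)

/-- The maximum of `d` over consecutive pairs of a list (a chain). -/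
def chainMax {X : Type*} (d : X → X → ℝ) : List X → ℝ
  | a :: b :: t => max (d a b) (chainMax d (b :: t))
  | _ => 0

/-- The subdominant ultrametric of a dissimilarity `d`:
`sub(d)(x,y)` is the infimum over all chains `x = z₀, z₁, …, z_k = y` (with `k ≥ 1`)
of the maximal consecutive dissimilarity, and `sub(d)(x,x) = 0`. -/
noncomputable def subdominant {X : Type*} [DecidableEq X] (d : X → X → ℝ) (x y : X) : ℝ :=
  if x = y then 0
  else sInf { m | ∃ L : List X, 2 ≤ L.length ∧ L.head? = some x ∧ L.getLast? = some y ∧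
    m = chainMax d L }

/-- The supremum distance `‖A − B‖_∞ = max_{x,y} |A(x,y) − B(x,y)|`. -/
noncomputable def supDist {X : Type*} (A B : X → X → ℝ) : ℝ :=
  ⨆ p : X × X, |A p.1 p.2 - B p.1 p.2|

section Helpers
set_option linter.unusedSectionVars false
variable {X : Type*}

def chainSet (d : X → X → ℝ) (x y : X) : Set ℝ :=
  { m | ∃ L : List X, 2 ≤ L.length ∧ L.head? = some x ∧ L.getLast? = some y ∧
    m = chainMax d L }

lemma chainMax_nil (d : X → X → ℝ) : chainMax d [] = 0 := rfl
lemma chainMax_single (d : X → X → ℝ) (a : X) : chainMax d [a] = 0 := rfl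
lemma chainMax_cons (d : X → X → ℝ) (a b : X) (t : List X) :
    chainMax d (a :: b :: t) = max (d a b) (chainMax d (b :: t)) := rfl

lemma chainMax_nonneg (d : X → X → ℝ) (hd : ∀ a b, 0 ≤ d a b) :
    ∀ L : List X, 0 ≤ chainMax d L
  | [] => le_refl 0
  | [_] => le_refl 0
  | a :: b :: _ => le_max_of_le_left (hd a b)

lemma chainMax_mem_range (d : X → X → ℝ) (hd : ∀ a b, 0 ≤ d a b) :
    ∀ L : List X, 2 ≤ L.length → ∃ p : X × X, chainMax d L = d p.1 p.2
  | a :: b :: [], _ =>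
    ⟨(a, b), by simp [chainMax_cons, chainMax_single, max_eq_left (hd a b)]⟩
  | a :: b :: c :: t, _ => by
    obtain ⟨p, hp⟩ := chainMax_mem_range d hd (b :: c :: t) (by simp)
    rcases max_cases (d a b) (chainMax d (b :: c :: t)) with ⟨h, _⟩ | ⟨h, _⟩
    · exact ⟨(a, b), by rw [chainMax_cons, h]⟩
    · exact ⟨p, by rw [chainMax_cons, h, hp]⟩

lemma chainSet_finite (d : X → X → ℝ) (hd : ∀ a b, 0 ≤ d a b) (x y : X) [Finite X] :
    (chainSet d x y).Finite := by
  apply Set.Finite.subset (Set.finite_range (fun p : X × X => d p.1 p.2))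
  rintro m ⟨L, hL, -, -, rfl⟩
  obtain ⟨p, hp⟩ := chainMax_mem_range d hd L hL
  exact ⟨p, hp.symm⟩

lemma mem_chainSet_pair (d : X → X → ℝ) (hd : ∀ a b, 0 ≤ d a b) (x y : X) :
    d x y ∈ chainSet d x y :=
  ⟨[x, y], by simp [chainMax_cons, chainMax_single, max_eq_left (hd x y)]⟩

lemma chainSet_nonneg (d : X → X → ℝ) (hd : ∀ a b, 0 ≤ d a b) (x y : X) :
    ∀ m ∈ chainSet d x y, 0 ≤ m := by
  rintro m ⟨L, -, -, -, rfl⟩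
  exact chainMax_nonneg d hd L

end Helpers

section Sub
set_option linter.unusedSectionVars false
variable {X : Type*} [DecidableEq X] [Finite X] (d : X → X → ℝ)
variable (hd : ∀ a b, 0 ≤ d a b)
include hd

omit hd in
lemma subdominant_self (x : X) : subdominant d x x = 0 := by simp [subdominant]

omit hd in
lemma subdominant_eq {x y : X} (h : x ≠ y) :
    subdominant d x y = sInf (chainSet d x y) := by
  simp [subdominant, h, chainSet]

lemma subdominant_mem {x y : X} (h : x ≠ y) :
    subdominant d x y ∈ chainSet d x y := by
  rw [subdominant_eq d h]
  exact Set.Nonempty.csInf_mem ⟨_, mem_chainSet_pair d hd x y⟩ (chainSet_finite d hd x y)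

lemma subdominant_le (x y : X) : subdominant d x y ≤ d x y := by
  rcases eq_or_ne x y with rfl | h
  · rw [subdominant_self]; exact hd x x
  · rw [subdominant_eq d h]
    exact csInf_le ((chainSet_finite d hd x y).bddBelow) (mem_chainSet_pair d hd x y)

lemma subdominant_nonneg (x y : X) : 0 ≤ subdominant d x y := by
  rcases eq_or_ne x y with rfl | h
  · rw [subdominant_self]
  · exact chainSet_nonneg d hd x y _ (subdominant_mem d hd h)

lemma exists_ne_of_chain :
    ∀ L : List X, ∀ x y : X, L.head? = some x → L.getLast? = some y → x ≠ y →
      ∃ a b : X, a ≠ b ∧ d a b ≤ chainMax d L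
  | [], x, y, hh, _, _ => by simp at hh
  | [a], x, y, hh, hl, hxy => by
    simp at hh hl; exact absurd (hh ▸ hl ▸ rfl) hxy
  | a :: b :: t, x, y, hh, hl, hxy => by
    simp only [List.head?_cons, Option.some.injEq] at hh
    rcases eq_or_ne a b with rfl | hab
    · have hl' : (a :: t).getLast? = some y := by
        rw [← hl]; rcases t with _ | ⟨c, t⟩ <;> simp [List.getLast?_cons_cons]
      obtain ⟨p, q, hpq, hle⟩ := exists_ne_of_chain (a :: t) x y (by simpa using hh) hl' hxy
      exact ⟨p, q, hpq, le_max_of_le_right hle⟩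
    · exact ⟨a, b, hab, le_max_left _ _⟩

lemma subdominant_pos (hd' : ∀ a b : X, a ≠ b → 0 < d a b) {x y : X} (h : x ≠ y) :
    0 < subdominant d x y := by
  obtain ⟨L, hL, hh, hl, heq⟩ := subdominant_mem d hd h
  obtain ⟨a, b, hab, hle⟩ := exists_ne_of_chain d hd L x y hh hl h
  exact lt_of_lt_of_le (hd' a b hab) (heq ▸ hle)

omit hd in
lemma chainMax_concat (hsymm : ∀ a b, d a b = d b a) :
    ∀ (L : List X) (hL : L ≠ []) (c : X),
      chainMax d (L ++ [c]) = max (chainMax d L) (d (L.getLast hL) c)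
  | [], h, _ => absurd rfl h
  | [a], _, c => by
    simp [chainMax_cons, chainMax_single, chainMax_nil, max_comm]
  | a :: b :: t, _, c => by
    have := chainMax_concat hsymm (b :: t) (by simp) c
    simp only [List.cons_append] at this ⊢
    rw [chainMax_cons, this, chainMax_cons, List.getLast_cons_cons, max_assoc]

omit hd in
lemma chainMax_reverse (hsymm : ∀ a b, d a b = d b a) :
    ∀ L : List X, chainMax d L.reverse = chainMax d L
  | [] => rfl
  | [a] => rfl
  | a :: b :: t => by
    have h1 : (a :: b :: t).reverse = (b :: t).reverse ++ [a] := by simp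
    rw [h1, chainMax_concat d hsymm _ (by simp) a, chainMax_reverse hsymm (b :: t),
      chainMax_cons]
    have h2 : (b :: t).reverse.getLast (by simp) = b := by
      rw [List.getLast_reverse]; simp
    rw [h2, hsymm b a, max_comm]

lemma subdominant_symm (hsymm : ∀ a b, d a b = d b a) (x y : X) :
    subdominant d x y = subdominant d y x := by
  rcases eq_or_ne x y with rfl | h
  · rfl
  · have key : ∀ u v : X, chainSet d u v ⊆ chainSet d v u := by
      rintro u v m ⟨L, hL, hh, hl, rfl⟩
      refine ⟨L.reverse, by simpa using hL, ?_, ?_, (chainMax_reverse d hsymm L).symm⟩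
      · rw [List.head?_reverse]; exact hl
      · rw [List.getLast?_reverse]; exact hh
    rw [subdominant_eq d h, subdominant_eq d h.symm]
    exact le_antisymm
      (le_csInf ⟨_, mem_chainSet_pair d hd y x⟩ fun m hm =>
        csInf_le (chainSet_finite d hd x y).bddBelow (key y x hm))
      (le_csInf ⟨_, mem_chainSet_pair d hd x y⟩ fun m hm =>
        csInf_le (chainSet_finite d hd y x).bddBelow (key x y hm))

end Sub

section Tri
set_option linter.unusedSectionVars false
variable {X : Type*} [DecidableEq X] [Finite X] (d : X → X → ℝ)

lemma chainMax_append_le (hd : ∀ a b, 0 ≤ d a b) :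
    ∀ (L : List X) (hL : L ≠ []) (M : List X),
      chainMax d (L ++ M) ≤ max (chainMax d L) (chainMax d (L.getLast hL :: M))
  | [], h, _ => absurd rfl h
  | [a], _, M => by
    simp only [List.singleton_append, List.getLast_singleton, chainMax_single]
    exact le_max_right _ _
  | a :: b :: t, _, M => by
    have ih := chainMax_append_le hd (b :: t) (by simp) M
    simp only [List.cons_append] at ih ⊢
    rw [chainMax_cons, List.getLast_cons_cons]
    calc max (d a b) (chainMax d (b :: t ++ M))
        ≤ max (d a b) (max (chainMax d (b :: t)) (chainMax d ((b :: t).getLast (by simp) :: M))) :=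
          max_le_max le_rfl ih
      _ = max (max (d a b) (chainMax d (b :: t))) (chainMax d ((b :: t).getLast (by simp) :: M)) :=
          (max_assoc _ _ _).symm
      _ = _ := by rw [chainMax_cons]

lemma subdominant_triangle (hd : ∀ a b, 0 ≤ d a b) (x y z : X) :
    subdominant d x z ≤ max (subdominant d x y) (subdominant d y z) := by
  rcases eq_or_ne x z with rfl | hxz
  · rw [subdominant_self]
    exact le_max_of_le_left (subdominant_nonneg d hd x y)
  rcases eq_or_ne x y with rfl | hxy
  · exact le_max_of_le_right le_rfl
  rcases eq_or_ne y z with rfl | hyz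
  · exact le_max_of_le_left le_rfl
  obtain ⟨L, hL2, hLh, hLl, hLm⟩ := subdominant_mem d hd hxy
  obtain ⟨M, hM2, hMh, hMl, hMm⟩ := subdominant_mem d hd hyz
  obtain ⟨m, M', rfl⟩ : ∃ m M', M = m :: M' := by
    rcases M with _ | ⟨m, M'⟩
    · simp at hM2
    · exact ⟨m, M', rfl⟩
  have hm : m = y := by simpa using hMh
  rw [hm] at hMm
  obtain ⟨m', M'', rfl⟩ : ∃ m' M'', M' = m' :: M'' := by
    rcases M' with _ | ⟨m', M''⟩
    · simp at hM2
    · exact ⟨m', M'', rfl⟩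
  have hLne : L ≠ [] := by rintro rfl; simp at hLh
  have hLlast : L.getLast hLne = y := by
    rwa [List.getLast?_eq_getLast hLne, Option.some.injEq] at hLl
  have hmem : chainMax d (L ++ m' :: M'') ∈ chainSet d x z := by
    refine ⟨L ++ m' :: M'', ?_, ?_, ?_, rfl⟩
    · rw [List.length_append]; omega
    · rcases L with _ | ⟨a, L'⟩
      · simp at hLh
      · simpa using hLh
    · have hMl' : (m' :: M'').getLast? = some z := by
        simpa [List.getLast?_cons_cons] using hMl
      simp [List.getLast?_append, hMl']
  have hbound : chainMax d (L ++ m' :: M'') ≤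
      max (chainMax d L) (chainMax d (y :: m' :: M'')) := by
    have := chainMax_append_le d hd L hLne (m' :: M'')
    rwa [hLlast] at this
  calc subdominant d x z ≤ chainMax d (L ++ m' :: M'') := by
        rw [subdominant_eq d hxz]
        exact csInf_le (chainSet_finite d hd x z).bddBelow hmem
    _ ≤ max (chainMax d L) (chainMax d (y :: m' :: M'')) := hbound
    _ = max (subdominant d x y) (subdominant d y z) := by rw [hLm, hMm]

lemma ultrametric_chainMax (u : X → X → ℝ) (hu : ∀ a b c, u a c ≤ max (u a b) (u b c)) :
    ∀ (L : List X) (x y : X), 2 ≤ L.length → L.head? = some x → L.getLast? = some y →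
      u x y ≤ chainMax u L
  | [], _, _, h2, _, _ => by simp at h2
  | [_], _, _, h2, _, _ => by simp at h2
  | a :: b :: [], x, y, _, hh, hl => by
    have hax : a = x := by simpa using hh
    have hby : b = y := by simpa using hl
    subst hax; subst hby
    exact le_max_of_le_left le_rfl
  | a :: b :: c :: t, x, y, _, hh, hl => by
    have hax : a = x := by simpa using hh
    subst hax
    have ih := ultrametric_chainMax u hu (b :: c :: t) b y (by simp) rfl
      (by simpa [List.getLast?_cons_cons] using hl)
    calc u a y ≤ max (u a b) (u b y) := hu a b y
      _ ≤ max (u a b) (chainMax u (b :: c :: t)) := max_le_max le_rfl (ih)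
      _ = chainMax u (a :: b :: c :: t) := (chainMax_cons u a b (c :: t)).symm

end Tri

lemma chainMax_le_add {X : Type*} (u d : X → X → ℝ) (δ : ℝ) (hδ0 : 0 ≤ δ)
    (h : ∀ a b, u a b ≤ d a b + δ) : ∀ L : List X, chainMax u L ≤ chainMax d L + δ
  | [] => by rw [chainMax_nil, chainMax_nil, zero_add]; exact hδ0
  | [_] => by rw [chainMax_single, chainMax_single, zero_add]; exact hδ0
  | a :: b :: t => by
    rw [chainMax_cons, chainMax_cons, ← max_add_add_right]
    exact max_le_max (h a b) (chainMax_le_add u d δ hδ0 h (b :: t))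


theorem closest_ultrametric_in_sup_norm {X : Type*} [Fintype X] [DecidableEq X] [Nonempty X]
    (d : X → X → ℝ) (hd : IsDissimilarity d)
    (ε : ℝ) (hε : ε = supDist d (subdominant d))
    (ustar : X → X → ℝ)
    (hustar : ∀ x y, ustar x y = if x = y then 0 else subdominant d x y + ε / 2) :
    IsUltrametric ustar ∧
    supDist d ustar = ε / 2 ∧
    ∀ u : X → X → ℝ, IsUltrametric u → supDist d ustar ≤ supDist d u := by
  obtain ⟨hsymm, hnn, hself, hpos⟩ := hd
  have hsub_le : ∀ x y, subdominant d x y ≤ d x y := subdominant_le d hnn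
  have hsub_nn : ∀ x y, 0 ≤ subdominant d x y := subdominant_nonneg d hnn
  set f : X × X → ℝ := fun p => |d p.1 p.2 - subdominant d p.1 p.2| with hf
  have hbddf : BddAbove (Set.range f) := Set.Finite.bddAbove (Set.finite_range f)
  have habs : ∀ x y, |d x y - subdominant d x y| = d x y - subdominant d x y := by
    intro x y; exact abs_of_nonneg (by linarith [hsub_le x y])
  have hεge : ∀ x y, d x y - subdominant d x y ≤ ε := by
    intro x y
    rw [hε, ← habs x y]
    exact le_ciSup hbddf (x, y)
  have hεnn : 0 ≤ ε := by
    obtain x0 := Classical.arbitrary X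
    have := hεge x0 x0
    rw [hself x0, subdominant_self d x0] at this
    linarith
  -- the maximizing pair
  obtain ⟨p, hp⟩ := Finite.exists_max f
  have hεp : ε = f p := by
    rw [hε]
    exact le_antisymm (ciSup_le hp) (le_ciSup hbddf p)
  -- ultrametric
  have hult : IsUltrametric ustar := by
    refine ⟨?_, ?_, ?_, ?_⟩
    · intro x y; rw [hustar]
      split
      · exact le_rfl
      · have := hsub_nn x y; linarith
    · intro x y; rw [hustar, hustar]
      rcases eq_or_ne x y with rfl | h
      · simp
      · rw [if_neg h, if_neg (Ne.symm h), subdominant_symm d hnn hsymm]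
    · intro x y
      constructor
      · intro h
        by_contra hne
        rw [hustar, if_neg hne] at h
        have := subdominant_pos d hnn hpos hne
        linarith
      · rintro rfl; rw [hustar, if_pos rfl]
    · intro x y z
      rcases eq_or_ne x z with rfl | hxz
      · rw [hustar x x, if_pos rfl]
        have h1 : 0 ≤ ustar x y := by
          rw [hustar]; split
          · exact le_rfl
          · have := hsub_nn x y; linarith
        exact le_max_of_le_left h1
      rcases eq_or_ne x y with rfl | hxy
      · exact le_max_of_le_right le_rfl
      rcases eq_or_ne y z with rfl | hyz
      · exact le_max_of_le_left le_rfl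
      rw [hustar x z, hustar x y, hustar y z, if_neg hxz, if_neg hxy, if_neg hyz,
        max_add_add_right]
      exact add_le_add (subdominant_triangle d hnn x y z) le_rfl
  -- the sup distance to ustar
  have hgbdd : BddAbove (Set.range fun p : X × X => |d p.1 p.2 - ustar p.1 p.2|) :=
    Set.Finite.bddAbove (Set.finite_range _)
  have hsup : supDist d ustar = ε / 2 := by
    apply le_antisymm
    · apply ciSup_le
      intro q
      rcases eq_or_ne q.1 q.2 with he | hne
      · rw [hustar, if_pos he, he, hself q.2]
        rw [sub_zero, abs_zero]
        linarith
      · rw [hustar, if_neg hne]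
        rw [abs_le]
        constructor
        · have := hsub_le q.1 q.2; linarith
        · have := hεge q.1 q.2; linarith
    · rcases eq_or_ne p.1 p.2 with he | hne
      · have hε0 : ε = 0 := by
          rw [hεp, hf]; simp only
          rw [he, hself p.2, subdominant_self]
          simp
        rw [hε0]
        obtain x0 := Classical.arbitrary X
        have h0 : |d x0 x0 - ustar x0 x0| ≤ supDist d ustar :=
          le_ciSup hgbdd (x0, x0)
        rw [hself x0, hustar, if_pos rfl, sub_zero, abs_zero] at h0
        linarith
      · have h1 : |d p.1 p.2 - ustar p.1 p.2| ≤ supDist d ustar :=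
          le_ciSup hgbdd p
        rw [hustar, if_neg hne] at h1
        have h2 : d p.1 p.2 - subdominant d p.1 p.2 = ε := by
          rw [hεp, hf]; simp [habs]
        have h3 : |d p.1 p.2 - (subdominant d p.1 p.2 + ε / 2)| = ε / 2 := by
          have : d p.1 p.2 - (subdominant d p.1 p.2 + ε / 2) = ε / 2 := by linarith
          rw [this, abs_of_nonneg (by linarith)]
        linarith [h3 ▸ h1]
  refine ⟨hult, hsup, ?_⟩
  -- optimality
  intro u hu
  obtain ⟨hu0, husym, huz, hutri⟩ := hu
  rw [hsup]
  set δ := supDist d u with hδ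
  have hubdd : BddAbove (Set.range fun p : X × X => |d p.1 p.2 - u p.1 p.2|) :=
    Set.Finite.bddAbove (Set.finite_range _)
  have hδle : ∀ x y, |d x y - u x y| ≤ δ := fun x y => le_ciSup hubdd (x, y)
  have hδ0 : 0 ≤ δ := by
    obtain x0 := Classical.arbitrary X
    have := hδle x0 x0
    have h1 := abs_nonneg (d x0 x0 - u x0 x0)
    linarith
  rcases eq_or_ne p.1 p.2 with he | hne
  · have hε0 : ε = 0 := by
      rw [hεp, hf]; simp only
      rw [he, hself p.2, subdominant_self]
      simp
    rw [hε0]; linarith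
  · obtain ⟨L, hL2, hLh, hLl, hLm⟩ := subdominant_mem d hnn hne
    have hchain : u p.1 p.2 ≤ chainMax u L :=
      ultrametric_chainMax u hutri L p.1 p.2 hL2 hLh hLl
    have hadd : chainMax u L ≤ chainMax d L + δ := by
      apply chainMax_le_add u d δ hδ0
      intro a b
      have := hδle a b
      have := abs_le.mp this
      linarith [this.1]
    have h2 : d p.1 p.2 - subdominant d p.1 p.2 = ε := by
      rw [hεp, hf]; simp [habs]
    have h4 := abs_le.mp (hδle p.1 p.2)
    have h5 : d p.1 p.2 - δ ≤ u p.1 p.2 := by linarith [h4.1]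
    rw [← hLm] at hadd
    linarith
end
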